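/- Let $\ell \ge 2$, $k \in \{0,\dots,\ell\}$, $i \ge 0$ even with $k+i \le \ell$ or $k-i \ge 0$, and $m \ge i/2$. Then $m\delta - \xi_k^{(\pm i)}$ lies in the positive cone $Q^+ = \bigoplus_{j=0}^{\ell}\mathbb{Z}_{\ge 0}\alpha_j$ of the root lattice, and its defect relative to $\Lambda_k$ satisfies $\mathrm{def}_{\Lambda_k}(m\delta - \xi_k^{(\pm i)}) = 2m - i/2 \ge i/2 \ge 0$. -/
import Mathlib


open scoped BigOperators

/-- Cartan matrix of affine type C⁽¹⁾_ℓ (indices in {0,…,ℓ}). -/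
def cartanC (ℓ i j : ℕ) : ℚ :=
  if i = j then 2
  else if i = 0 ∧ j = 1 then -1
  else if i = 1 ∧ j = 0 then -2
  else if i = ℓ ∧ j = ℓ - 1 then -1
  else if i = ℓ - 1 ∧ j = ℓ then -2
  else if 1 ≤ i ∧ i ≤ ℓ - 1 ∧ (j = i + 1 ∨ j + 1 = i) then -1
  else 0

/-- d = (2,1,…,1,2). -/
def dC (ℓ i : ℕ) : ℚ := if i = 0 ∨ i = ℓ then 2 else 1

/-- Weight space: first component = coefficients of fundamental weights Λ_i,
second component = coefficients of simple roots α_i. -/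
abbrev Wt : Type := (ℕ → ℚ) × (ℕ → ℚ)

/-- The fundamental weight Λ_k. -/
def Lam (k : ℕ) : Wt := (fun i => if i = k then 1 else 0, 0)

/-- The simple root α_i. -/
def al (i : ℕ) : Wt := (0, fun j => if j = i then 1 else 0)

/-- The pairing ⟨α_j^∨, v⟩, extended linearly from ⟨α_j^∨,Λ_i⟩ = δ_{ij},
⟨α_j^∨,α_i⟩ = a_{ji}. -/
def pairC (ℓ j : ℕ) (v : Wt) : ℚ :=
  v.1 j + ∑ i ∈ Finset.range (ℓ + 1), v.2 i * cartanC ℓ j i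

/-- The symmetric bilinear form, with (Λ_i,α_j) = d_j δ_{ij} and (α_i,α_j) = d_i a_{ij}. -/
def formC (ℓ : ℕ) (v w : Wt) : ℚ :=
  (∑ j ∈ Finset.range (ℓ + 1), v.1 j * dC ℓ j * w.2 j)
  + (∑ j ∈ Finset.range (ℓ + 1), w.1 j * dC ℓ j * v.2 j)
  + ∑ i ∈ Finset.range (ℓ + 1), ∑ j ∈ Finset.range (ℓ + 1),
      v.2 i * dC ℓ i * cartanC ℓ i j * w.2 j

/-- The defect of β relative to Λ_k. -/
def defC (ℓ k : ℕ) (β : Wt) : ℚ := formC ℓ (Lam k) β - formC ℓ β β / 2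

/-- The null root δ = α_0 + 2α_1 + ⋯ + 2α_{ℓ-1} + α_ℓ. -/
def deltaC (ℓ : ℕ) : Wt :=
  (0, fun j => if j = 0 ∨ j = ℓ then 1 else if j < ℓ then 2 else 0)

/-- ξ_k^{(i)} = α_{k+1} + 2α_{k+2} + ⋯ + (i-1)α_{k+i-1} + i(α_{k+i}+⋯+α_{ℓ-1}) + (i/2)α_ℓ
(equal to 0 when i = 0). -/
def xiP (ℓ k i : ℕ) : Wt :=
  (0, fun j => if j ≤ k ∨ ℓ < j then 0
      else if j = ℓ then (i : ℚ) / 2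
      else min ((j : ℚ) - k) i)

/-- ξ_k^{(-i)} = α_{k-1} + 2α_{k-2} + ⋯ + (i-1)α_{k-i+1} + i(α_{k-i}+⋯+α_1) + (i/2)α_0
(equal to 0 when i = 0). -/
def xiM (ℓ k i : ℕ) : Wt :=
  (0, fun j => if k ≤ j ∨ ℓ < j then 0
      else if j = 0 then (i : ℚ) / 2
      else min ((k : ℚ) - j) i)

/-- The simple reflection r_j : v ↦ v − ⟨α_j^∨, v⟩α_j. -/
def reflC (ℓ j : ℕ) (v : Wt) : Wt := v - pairC ℓ j v • al j

/-- Action of a word in the simple reflections (leftmost letter applied last,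
so the word reads as the usual composition r_{j₁}r_{j₂}⋯r_{jₙ}). -/
def wordAct (ℓ : ℕ) (w : List ℕ) (v : Wt) : Wt := w.foldr (reflC ℓ) v

/-- The residue map π_ℓ : ℤ → {0,…,ℓ}. -/
def fres (ℓ : ℕ) (m : ℤ) : ℕ :=
  let r := (m % (2 * (ℓ : ℤ))).toNat
  if r ≤ ℓ then r else 2 * ℓ - r

/-- Content of the partition `lam` (rows indexed by `r < N`, all rows `≥ N` empty),
with residues computed at charge k, as an element of the root lattice. -/
def contV (ℓ k N : ℕ) (lam : ℕ → ℕ) : Wt :=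
  ∑ r ∈ Finset.range N, ∑ c ∈ Finset.range (lam r),
    al (fres ℓ ((k : ℤ) + c - r))

section Lemmas

lemma cartan_val (ℓ j i : ℕ) (hℓ : 2 ≤ ℓ) (hj : j ≤ ℓ) (hi : i ≤ ℓ) :
    cartanC ℓ j i =
      if i = j then 2
      else if j = i + 1 then (if j = 1 then -2 else -1)
      else if i = j + 1 then (if j = ℓ - 1 then -2 else -1)
      else 0 := by
  unfold cartanC
  split_ifs <;> first | rfl | (exfalso; omega) | norm_num

lemma rowSum (ℓ j : ℕ) (hℓ : 2 ≤ ℓ) (hj : j ≤ ℓ) (g : ℕ → ℚ) :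
    ∑ i ∈ Finset.range (ℓ + 1), g i * cartanC ℓ j i =
      2 * g j + (if 1 ≤ j then (if j = 1 then -2 else -1) * g (j - 1) else 0)
        + (if j < ℓ then (if j = ℓ - 1 then -2 else -1) * g (j + 1) else 0) := by
  have key : ∀ i ∈ Finset.range (ℓ + 1), g i * cartanC ℓ j i =
      (if i = j then 2 * g i else 0)
      + (if i + 1 = j then (if j = 1 then -2 else -1) * g i else 0)
      + (if i = j + 1 then (if j = ℓ - 1 then -2 else -1) * g i else 0) := by
    intro i hi
    rw [cartan_val ℓ j i hℓ hj (by simpa using Nat.lt_succ_iff.mp (Finset.mem_range.mp hi))]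
    split_ifs <;> first | ring1 | (exfalso; omega)
  rw [Finset.sum_congr rfl key]
  rw [Finset.sum_add_distrib, Finset.sum_add_distrib]
  rw [Finset.sum_ite_eq' (Finset.range (ℓ+1)) j (fun i => 2 * g i)]
  congr 1
  · congr 1
    · simp [Finset.mem_range, Nat.lt_succ_iff.mpr hj]
    · rcases Nat.eq_zero_or_pos j with h0 | h1
      · subst h0
        rw [Finset.sum_eq_zero (by intro i _; simp)]
        simp
      · have : ∀ i, (i + 1 = j) = (i = j - 1) := by intro i; simp; omega
        simp only [this]
        rw [Finset.sum_ite_eq' (Finset.range (ℓ+1)) (j-1) (fun i => (if j = 1 then -2 else -1) * g i)]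
        have h1' : 1 ≤ j := h1
        have hmem : j - 1 ∈ Finset.range (ℓ + 1) := by simp; omega
        rw [if_pos hmem, if_pos h1']
  · rcases eq_or_lt_of_le hj with h0 | h1
    · rw [Finset.sum_eq_zero (by intro i hi; simp at hi ⊢; omega)]
      simp [h0]
    · rw [Finset.sum_ite_eq' (Finset.range (ℓ+1)) (j+1) (fun i => (if j = ℓ - 1 then -2 else -1) * g i)]
      have : j + 1 ∈ Finset.range (ℓ + 1) := by simp; omega
      simp [this, h1]

lemma delta_val (ℓ x : ℕ) :
    (deltaC ℓ).2 x = if x = 0 ∨ x = ℓ then 1 else if x < ℓ then 2 else 0 := rfl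

lemma pairDelta (ℓ j : ℕ) (hℓ : 2 ≤ ℓ) (hj : j ≤ ℓ) : pairC ℓ j (deltaC ℓ) = 0 := by
  rw [pairC, show (deltaC ℓ).1 j = 0 from rfl, rowSum ℓ j hℓ hj, zero_add]
  simp only [delta_val]
  split_ifs <;> first | ring1 | (exfalso; (try simp only [false_or, or_false] at *); omega)

/-! ### xiP values -/

lemma xiP_zero (ℓ k i0 x : ℕ) (h : x ≤ k ∨ ℓ < x) : (xiP ℓ k i0).2 x = 0 := by
  show (if x ≤ k ∨ ℓ < x then (0:ℚ) else _) = 0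
  rw [if_pos h]

lemma xiP_lin (ℓ k i0 x : ℕ) (hk : k ≤ x) (hi : x ≤ k + i0) (hl : x < ℓ) :
    (xiP ℓ k i0).2 x = (x:ℚ) - k := by
  rcases eq_or_lt_of_le hk with h | h
  · rw [xiP_zero ℓ k i0 x (Or.inl (by omega))]
    rw [← h]
    ring
  · show (if x ≤ k ∨ ℓ < x then (0:ℚ) else if x = ℓ then _ else _) = _
    rw [if_neg (by omega), if_neg (by omega)]
    apply min_eq_left
    have h1 : (x:ℚ) ≤ (k:ℚ) + (i0:ℚ) := by exact_mod_cast hi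
    linarith

lemma xiP_const (ℓ k i0 x : ℕ) (h1 : k + i0 ≤ x) (hl : x < ℓ) (h0 : 0 < i0) :
    (xiP ℓ k i0).2 x = (i0:ℚ) := by
  show (if x ≤ k ∨ ℓ < x then (0:ℚ) else if x = ℓ then _ else _) = _
  rw [if_neg (by omega), if_neg (by omega)]
  apply min_eq_right
  have h2 : (k:ℚ) + (i0:ℚ) ≤ (x:ℚ) := by exact_mod_cast h1
  linarith

lemma xiP_ell (ℓ k i0 : ℕ) (h : k < ℓ) : (xiP ℓ k i0).2 ℓ = (i0:ℚ)/2 := by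
  show (if ℓ ≤ k ∨ ℓ < ℓ then (0:ℚ) else if ℓ = ℓ then _ else _) = _
  rw [if_neg (by omega), if_pos rfl]

lemma xiP_all_zero (ℓ k x : ℕ) : (xiP ℓ k 0).2 x = 0 := by
  show (if x ≤ k ∨ ℓ < x then (0:ℚ) else if x = ℓ then _ else _) = 0
  split_ifs with h1 h2
  · rfl
  · norm_num
  · apply min_eq_right
    have : (k:ℚ) ≤ (x:ℚ) := by exact_mod_cast (by omega : k ≤ x)
    push_cast
    linarith

/-! ### xiP boundary terms -/

lemma cmP (ℓ k i0 j : ℕ) (hℓ : 2 ≤ ℓ) (hkj : k < j) (hji : j ≤ k + i0) (hjl : j ≤ ℓ) :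
    (if 1 ≤ j then (if j = 1 then (-2:ℚ) else -1) * (xiP ℓ k i0).2 (j-1) else 0)
      = -((j:ℚ) - 1 - k) := by
  rw [if_pos (by omega)]
  rcases eq_or_ne j 1 with h1 | h1
  · have hk0 : k = 0 := by omega
    rw [if_pos h1, xiP_zero ℓ k i0 (j-1) (Or.inl (by omega))]
    subst h1
    simp [hk0]
  · rw [if_neg h1, xiP_lin ℓ k i0 (j-1) (by omega) (by omega) (by omega)]
    rw [Nat.cast_sub (by omega : 1 ≤ j)]
    push_cast
    ring

lemma cmPC (ℓ k i0 j : ℕ) (hkj : k + i0 + 1 ≤ j) (hjl : j ≤ ℓ) (h2 : 2 ≤ i0) :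
    (if 1 ≤ j then (if j = 1 then (-2:ℚ) else -1) * (xiP ℓ k i0).2 (j-1) else 0)
      = -(i0:ℚ) := by
  rw [if_pos (by omega), if_neg (by omega : ¬ j = 1),
    xiP_const ℓ k i0 (j-1) (by omega) (by omega) (by omega)]
  ring

lemma cpP_lin (ℓ k i0 j : ℕ) (hk : k ≤ j + 1) (hi : j + 1 ≤ k + i0) (hl : j + 1 < ℓ) :
    (if j < ℓ then (if j = ℓ - 1 then (-2:ℚ) else -1) * (xiP ℓ k i0).2 (j+1) else 0)
      = -((j:ℚ) + 1 - k) := by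
  rw [if_pos (by omega), if_neg (by omega), xiP_lin ℓ k i0 (j+1) hk hi hl]
  push_cast
  ring

lemma cpP_const (ℓ k i0 j : ℕ) (h1 : k + i0 ≤ j + 1) (hl : j + 1 < ℓ) (h0 : 0 < i0) :
    (if j < ℓ then (if j = ℓ - 1 then (-2:ℚ) else -1) * (xiP ℓ k i0).2 (j+1) else 0)
      = -(i0:ℚ) := by
  rw [if_pos (by omega), if_neg (by omega), xiP_const ℓ k i0 (j+1) h1 hl h0]
  ring

lemma cpP_half (ℓ k i0 j : ℕ) (hℓ : 2 ≤ ℓ) (hjl : j + 1 = ℓ) (hkl : k < ℓ) :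
    (if j < ℓ then (if j = ℓ - 1 then (-2:ℚ) else -1) * (xiP ℓ k i0).2 (j+1) else 0)
      = -(i0:ℚ) := by
  rw [if_pos (by omega), if_pos (by omega : j = ℓ - 1), hjl, xiP_ell ℓ k i0 hkl]
  ring

lemma pairXiP (ℓ k i0 j : ℕ) (hℓ : 2 ≤ ℓ) (hj : j ≤ ℓ) (h2 : 2 ≤ i0) (hki : k + i0 ≤ ℓ) :
    pairC ℓ j (xiP ℓ k i0) = if j = k then -1 else if j = k + i0 then 1 else 0 := by
  rw [pairC, show (xiP ℓ k i0).1 j = 0 from rfl, rowSum ℓ j hℓ hj, zero_add]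
  by_cases e1 : j < k
  · rw [xiP_zero ℓ k i0 j (Or.inl (by omega)), xiP_zero ℓ k i0 (j-1) (Or.inl (by omega)),
      xiP_zero ℓ k i0 (j+1) (Or.inl (by omega)), if_neg (by omega : ¬ j = k),
      if_neg (by omega : ¬ j = k + i0)]
    split_ifs <;> ring
  by_cases e2 : j = k
  · rw [e2, xiP_zero ℓ k i0 k (Or.inl le_rfl), xiP_zero ℓ k i0 (k-1) (Or.inl (by omega)),
      cpP_lin ℓ k i0 k (by omega) (by omega) (by omega), if_pos rfl]
    split_ifs <;> ring
  by_cases e3 : j < k + i0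
  · rw [cmP ℓ k i0 j hℓ (by omega) (by omega) hj,
      xiP_lin ℓ k i0 j (by omega) (by omega) (by omega),
      if_neg e2, if_neg (by omega : ¬ j = k + i0)]
    by_cases e4 : j + 1 < ℓ
    · rw [cpP_lin ℓ k i0 j (by omega) (by omega) e4]
      ring
    · rw [cpP_half ℓ k i0 j hℓ (by omega) (by omega)]
      have h5 : (j:ℚ) + 1 = (k:ℚ) + (i0:ℚ) := by exact_mod_cast (by omega : j + 1 = k + i0)
      linarith
  by_cases e5 : j = k + i0
  · rw [cmP ℓ k i0 j hℓ (by omega) (by omega) hj, if_neg e2, if_pos e5]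
    have h5 : (j:ℚ) = (k:ℚ) + (i0:ℚ) := by exact_mod_cast e5
    by_cases e6 : j < ℓ
    · rw [xiP_lin ℓ k i0 j (by omega) (by omega) e6]
      by_cases e7 : j + 1 < ℓ
      · rw [cpP_const ℓ k i0 j (by omega) e7 (by omega)]
        linarith
      · rw [cpP_half ℓ k i0 j hℓ (by omega) (by omega)]
        linarith
    · have hgj : (xiP ℓ k i0).2 j = (i0:ℚ)/2 := by
        rw [(by omega : j = ℓ)]; exact xiP_ell ℓ k i0 (by omega)
      rw [hgj, if_neg e6]
      linarith
  -- k + i0 < j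
  rw [if_neg e2, if_neg e5]
  by_cases e8 : j < ℓ
  · rw [cmPC ℓ k i0 j (by omega) hj h2, xiP_const ℓ k i0 j (by omega) e8 (by omega)]
    by_cases e9 : j + 1 < ℓ
    · rw [cpP_const ℓ k i0 j (by omega) e9 (by omega)]
      ring
    · rw [cpP_half ℓ k i0 j hℓ (by omega) (by omega)]
      ring
  · have hgj : (xiP ℓ k i0).2 j = (i0:ℚ)/2 := by
      rw [(by omega : j = ℓ)]; exact xiP_ell ℓ k i0 (by omega)
    rw [hgj, cmPC ℓ k i0 j (by omega) hj h2, if_neg e8]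
    ring

end Lemmas

section M

/-! ### xiM values -/

lemma xiM_zero (ℓ k i0 x : ℕ) (h : k ≤ x ∨ ℓ < x) : (xiM ℓ k i0).2 x = 0 := by
  show (if k ≤ x ∨ ℓ < x then (0:ℚ) else _) = 0
  rw [if_pos h]

lemma xiM_lin (ℓ k i0 x : ℕ) (h1 : k ≤ x + i0) (h2 : x ≤ k) (h3 : 0 < x) (hkl : k ≤ ℓ) :
    (xiM ℓ k i0).2 x = (k:ℚ) - x := by
  rcases eq_or_lt_of_le h2 with h | h
  · rw [xiM_zero ℓ k i0 x (Or.inl (by omega)), h]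
    ring
  · show (if k ≤ x ∨ ℓ < x then (0:ℚ) else if x = 0 then _ else _) = _
    rw [if_neg (by omega), if_neg (by omega)]
    apply min_eq_left
    have hc : (k:ℚ) ≤ (x:ℚ) + (i0:ℚ) := by exact_mod_cast h1
    linarith

lemma xiM_const (ℓ k i0 x : ℕ) (h1 : x + i0 ≤ k) (h3 : 0 < x) (hkl : k ≤ ℓ) (h0 : 0 < i0) :
    (xiM ℓ k i0).2 x = (i0:ℚ) := by
  show (if k ≤ x ∨ ℓ < x then (0:ℚ) else if x = 0 then _ else _) = _
  rw [if_neg (by omega), if_neg (by omega)]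
  apply min_eq_right
  have hc : (x:ℚ) + (i0:ℚ) ≤ (k:ℚ) := by exact_mod_cast h1
  linarith

lemma xiM_nought (ℓ k i0 : ℕ) (hk : 0 < k) (hkl : k ≤ ℓ) : (xiM ℓ k i0).2 0 = (i0:ℚ)/2 := by
  show (if k ≤ 0 ∨ ℓ < 0 then (0:ℚ) else if 0 = 0 then _ else _) = _
  rw [if_neg (by omega), if_pos rfl]

lemma xiM_all_zero (ℓ k x : ℕ) (hkl : k ≤ ℓ) : (xiM ℓ k 0).2 x = 0 := by
  show (if k ≤ x ∨ ℓ < x then (0:ℚ) else if x = 0 then _ else _) = 0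
  split_ifs with h1 h2
  · rfl
  · norm_num
  · apply min_eq_right
    have : (x:ℚ) ≤ (k:ℚ) := by exact_mod_cast (by omega : x ≤ k)
    push_cast
    linarith

/-! ### xiM boundary terms -/

lemma cmM_lin (ℓ k i0 j : ℕ) (hj1 : 1 ≤ j) (h1 : k + 1 ≤ j + i0) (h2 : j ≤ k)
    (hkl : k ≤ ℓ) (h2i : 2 ≤ i0) (hik : i0 ≤ k) :
    (if 1 ≤ j then (if j = 1 then (-2:ℚ) else -1) * (xiM ℓ k i0).2 (j-1) else 0)
      = -((k:ℚ) - j + 1) := by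
  rw [if_pos hj1]
  rcases eq_or_ne j 1 with h | h
  · have hk : k = i0 := by omega
    rw [if_pos h, (by omega : j - 1 = 0), xiM_nought ℓ k i0 (by omega) hkl]
    have hc : (k:ℚ) = (i0:ℚ) := by exact_mod_cast hk
    have hj : (j:ℚ) = 1 := by exact_mod_cast h
    rw [hj, hc]
    ring
  · rw [if_neg h, xiM_lin ℓ k i0 (j-1) (by omega) (by omega) (by omega) hkl,
      Nat.cast_sub (by omega : 1 ≤ j)]
    push_cast
    ring

lemma cmM_const (ℓ k i0 j : ℕ) (hj1 : 1 ≤ j) (h1 : j + i0 ≤ k + 1) (h2i : 2 ≤ i0)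
    (hkl : k ≤ ℓ) :
    (if 1 ≤ j then (if j = 1 then (-2:ℚ) else -1) * (xiM ℓ k i0).2 (j-1) else 0)
      = -(i0:ℚ) := by
  rw [if_pos hj1]
  rcases eq_or_ne j 1 with h | h
  · rw [if_pos h, (by omega : j - 1 = 0), xiM_nought ℓ k i0 (by omega) hkl]
    ring
  · rw [if_neg h, xiM_const ℓ k i0 (j-1) (by omega) (by omega) hkl (by omega)]
    ring

lemma cpM_lin (ℓ k i0 j : ℕ) (h1 : k ≤ j + 1 + i0) (h2 : j + 1 ≤ k) (hkl : k ≤ ℓ)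
    (hℓ : 2 ≤ ℓ) :
    (if j < ℓ then (if j = ℓ - 1 then (-2:ℚ) else -1) * (xiM ℓ k i0).2 (j+1) else 0)
      = -((k:ℚ) - j - 1) := by
  rw [if_pos (by omega)]
  by_cases h : j = ℓ - 1
  · have hk : k = j + 1 := by omega
    rw [if_pos h, xiM_zero ℓ k i0 (j+1) (Or.inl (by omega))]
    have hc : (k:ℚ) = (j:ℚ) + 1 := by exact_mod_cast hk
    rw [hc]
    ring
  · rw [if_neg h, xiM_lin ℓ k i0 (j+1) (by omega) h2 (by omega) hkl]
    push_cast
    ring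

lemma cpM_const (ℓ k i0 j : ℕ) (h1 : j + 1 + i0 ≤ k) (hkl : k ≤ ℓ) (h0 : 0 < i0) :
    (if j < ℓ then (if j = ℓ - 1 then (-2:ℚ) else -1) * (xiM ℓ k i0).2 (j+1) else 0)
      = -(i0:ℚ) := by
  rw [if_pos (by omega), if_neg (by omega), xiM_const ℓ k i0 (j+1) h1 (by omega) hkl h0]
  ring

lemma pairXiM (ℓ k i0 j : ℕ) (hℓ : 2 ≤ ℓ) (hj : j ≤ ℓ) (h2 : 2 ≤ i0) (hik : i0 ≤ k)
    (hk : k ≤ ℓ) :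
    pairC ℓ j (xiM ℓ k i0) = if j = k then -1 else if j + i0 = k then 1 else 0 := by
  rw [pairC, show (xiM ℓ k i0).1 j = 0 from rfl, rowSum ℓ j hℓ hj, zero_add]
  by_cases e1 : k < j
  · rw [xiM_zero ℓ k i0 j (Or.inl (by omega)), xiM_zero ℓ k i0 (j-1) (Or.inl (by omega)),
      xiM_zero ℓ k i0 (j+1) (Or.inl (by omega)), if_neg (by omega : ¬ j = k),
      if_neg (by omega : ¬ j + i0 = k)]
    split_ifs <;> ring
  by_cases e2 : j = k
  · rw [xiM_zero ℓ k i0 j (Or.inl (by omega)), xiM_zero ℓ k i0 (j+1) (Or.inl (by omega)),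
      cmM_lin ℓ k i0 j (by omega) (by omega) (by omega) hk h2 hik, if_pos e2]
    have hc : (j:ℚ) = (k:ℚ) := by exact_mod_cast e2
    rw [hc]
    split_ifs <;> ring
  by_cases e3 : k < j + i0
  · -- k - i0 < j < k
    rw [cmM_lin ℓ k i0 j (by omega) (by omega) (by omega) hk h2 hik,
      xiM_lin ℓ k i0 j (by omega) (by omega) (by omega) hk,
      cpM_lin ℓ k i0 j (by omega) (by omega) hk hℓ,
      if_neg e2, if_neg (by omega : ¬ j + i0 = k)]
    ring
  by_cases e4 : j + i0 = k
  · have hc : (j:ℚ) + (i0:ℚ) = (k:ℚ) := by exact_mod_cast e4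
    rw [if_neg e2, if_pos e4]
    by_cases e5 : 1 ≤ j
    · rw [cmM_const ℓ k i0 j e5 (by omega) h2 hk,
        xiM_lin ℓ k i0 j (by omega) (by omega) (by omega) hk,
        cpM_lin ℓ k i0 j (by omega) (by omega) hk hℓ]
      linarith
    · have hj0 : j = 0 := by omega
      rw [if_neg e5, cpM_lin ℓ k i0 j (by omega) (by omega) hk hℓ]
      have hg : (xiM ℓ k i0).2 j = (i0:ℚ)/2 := by
        rw [hj0]; exact xiM_nought ℓ k i0 (by omega) hk
      rw [hg]
      linarith
  -- j + i0 < k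
  rw [if_neg e2, if_neg e4]
  by_cases e5 : 1 ≤ j
  · rw [cmM_const ℓ k i0 j e5 (by omega) h2 hk,
      xiM_const ℓ k i0 j (by omega) (by omega) hk (by omega),
      cpM_const ℓ k i0 j (by omega) hk (by omega)]
    ring
  · have hj0 : j = 0 := by omega
    rw [if_neg e5, cpM_const ℓ k i0 j (by omega) hk (by omega)]
    have hg : (xiM ℓ k i0).2 j = (i0:ℚ)/2 := by
      rw [hj0]; exact xiM_nought ℓ k i0 (by omega) hk
    rw [hg]
    ring

end M

section Form

lemma coef_sub (v w : Wt) (m : ℕ) (x : ℕ) : (m • v - w).2 x = m * v.2 x - w.2 x := by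
  have h : (m • v - w).2 x = m • v.2 x - w.2 x := rfl
  rw [h, nsmul_eq_mul]

lemma coef1_sub (v w : Wt) (m : ℕ) (x : ℕ) : (m • v - w).1 x = m * v.1 x - w.1 x := by
  have h : (m • v - w).1 x = m • v.1 x - w.1 x := rfl
  rw [h, nsmul_eq_mul]

lemma pairC_comb (ℓ j m : ℕ) (v w : Wt) :
    pairC ℓ j (m • v - w) = m * pairC ℓ j v - pairC ℓ j w := by
  simp only [pairC]
  rw [Finset.sum_congr rfl (fun i _ => by rw [coef_sub] ; ring_nf :
    ∀ i ∈ Finset.range (ℓ+1), (m • v - w).2 i * cartanC ℓ j i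
      = (m : ℚ) * (v.2 i * cartanC ℓ j i) - w.2 i * cartanC ℓ j i)]
  rw [Finset.sum_sub_distrib, ← Finset.mul_sum, coef1_sub]
  ring

lemma formC_self (ℓ : ℕ) (v : Wt) (hv : ∀ x, v.1 x = 0) :
    formC ℓ v v = ∑ i ∈ Finset.range (ℓ+1), v.2 i * dC ℓ i * pairC ℓ i v := by
  have hz1 : ∑ j ∈ Finset.range (ℓ+1), v.1 j * dC ℓ j * v.2 j = 0 :=
    Finset.sum_eq_zero (fun j _ => by rw [hv]; ring)
  rw [formC, hz1, zero_add, zero_add]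
  refine Finset.sum_congr rfl fun i _ => ?_
  rw [pairC, hv, zero_add, Finset.mul_sum]
  refine Finset.sum_congr rfl fun j _ => by ring

lemma formC_Lam (ℓ k : ℕ) (hk : k ≤ ℓ) (β : Wt) (hβ : ∀ x, β.1 x = 0) :
    formC ℓ (Lam k) β = dC ℓ k * β.2 k := by
  have hz2 : ∑ j ∈ Finset.range (ℓ+1), β.1 j * dC ℓ j * (Lam k).2 j = 0 :=
    Finset.sum_eq_zero (fun j _ => by rw [hβ]; ring)
  have hz3 : ∑ i ∈ Finset.range (ℓ+1), ∑ j ∈ Finset.range (ℓ+1),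
      (Lam k).2 i * dC ℓ i * cartanC ℓ i j * β.2 j = 0 :=
    Finset.sum_eq_zero (fun i _ => Finset.sum_eq_zero (fun j _ => by
      show (0:ℕ→ℚ) i * dC ℓ i * cartanC ℓ i j * β.2 j = 0
      simp))
  have h1 : ∀ j ∈ Finset.range (ℓ+1), (Lam k).1 j * dC ℓ j * β.2 j
      = if j = k then dC ℓ j * β.2 j else 0 := by
    intro j _
    show (if j = k then (1:ℚ) else 0) * dC ℓ j * β.2 j = _
    split_ifs <;> ring
  rw [formC, hz2, hz3, Finset.sum_congr rfl h1,
    Finset.sum_ite_eq' (Finset.range (ℓ+1)) k (fun j => dC ℓ j * β.2 j),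
    if_pos (by simp; omega : k ∈ Finset.range (ℓ+1))]
  ring

lemma sum_two (n k1 k2 : ℕ) (h12 : k1 ≠ k2) (h1 : k1 < n) (h2 : k2 < n) (f g : ℕ → ℚ) :
    ∑ i ∈ Finset.range n, (if i = k1 then f i else if i = k2 then g i else 0)
      = f k1 + g k2 := by
  have key : ∀ i ∈ Finset.range n, (if i = k1 then f i else if i = k2 then g i else 0)
      = (if i = k1 then f i else 0) + (if i = k2 then g i else 0) := by
    intro i _
    split_ifs <;> first | ring1 | (exfalso; omega)
  rw [Finset.sum_congr rfl key, Finset.sum_add_distrib, Finset.sum_ite_eq',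
    Finset.sum_ite_eq', if_pos (by simp; omega : k1 ∈ Finset.range n),
    if_pos (by simp; omega : k2 ∈ Finset.range n)]

end Form

section Def

lemma defP (ℓ k i0 m : ℕ) (hℓ : 2 ≤ ℓ) (hk : k ≤ ℓ) (h2 : 2 ≤ i0) (hki : k + i0 ≤ ℓ) :
    defC ℓ k (m • deltaC ℓ - xiP ℓ k i0) = 2 * (m:ℚ) - (i0:ℚ)/2 := by
  set β := m • deltaC ℓ - xiP ℓ k i0 with hβ
  have hβ1 : ∀ x, β.1 x = 0 := by
    intro x
    rw [hβ, coef1_sub]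
    show (m:ℚ) * (0:ℕ→ℚ) x - (0:ℕ→ℚ) x = 0
    simp
  have hpair : ∀ i, i ≤ ℓ → pairC ℓ i β
      = -(if i = k then -1 else if i = k + i0 then (1:ℚ) else 0) := by
    intro i hi
    rw [hβ, pairC_comb, pairDelta ℓ i hℓ hi, pairXiP ℓ k i0 i hℓ hi h2 hki]
    ring
  have b1 : β.2 k * dC ℓ k = 2 * (m:ℚ) := by
    rw [hβ, coef_sub, xiP_zero ℓ k i0 k (Or.inl le_rfl), delta_val]
    unfold dC
    split_ifs <;> first | ring1 | (exfalso; omega)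
  have b2 : β.2 (k + i0) * dC ℓ (k + i0) = 2 * (m:ℚ) - (i0:ℚ) := by
    rw [hβ, coef_sub, delta_val]
    unfold dC
    by_cases hcase : k + i0 < ℓ
    · rw [xiP_const ℓ k i0 (k+i0) le_rfl hcase (by omega)]
      split_ifs <;> first | ring1 | (exfalso; omega)
    · rw [(by omega : k + i0 = ℓ), xiP_ell ℓ k i0 (by omega)]
      split_ifs <;> first | ring1 | (exfalso; omega)
  have hform : formC ℓ β β = (i0:ℚ) := by
    rw [formC_self ℓ β hβ1]
    have key : ∀ i ∈ Finset.range (ℓ+1), β.2 i * dC ℓ i * pairC ℓ i β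
        = (if i = k then β.2 i * dC ℓ i else if i = k + i0 then -(β.2 i * dC ℓ i) else 0) := by
      intro i hi
      rw [hpair i (by simp at hi; omega)]
      split_ifs <;> ring
    rw [Finset.sum_congr rfl key,
      sum_two (ℓ+1) k (k+i0) (by omega) (by omega) (by omega)]
    rw [b1]
    have : -(β.2 (k+i0) * dC ℓ (k+i0)) = -(2 * (m:ℚ) - (i0:ℚ)) := by rw [b2]
    rw [this]
    ring
  have hlam : formC ℓ (Lam k) β = 2 * (m:ℚ) := by
    rw [formC_Lam ℓ k hk β hβ1, mul_comm, b1]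
  rw [defC, hlam, hform]

lemma defM (ℓ k i0 m : ℕ) (hℓ : 2 ≤ ℓ) (hk : k ≤ ℓ) (h2 : 2 ≤ i0) (hik : i0 ≤ k) :
    defC ℓ k (m • deltaC ℓ - xiM ℓ k i0) = 2 * (m:ℚ) - (i0:ℚ)/2 := by
  set β := m • deltaC ℓ - xiM ℓ k i0 with hβ
  have hβ1 : ∀ x, β.1 x = 0 := by
    intro x
    rw [hβ, coef1_sub]
    show (m:ℚ) * (0:ℕ→ℚ) x - (0:ℕ→ℚ) x = 0
    simp
  have hpair : ∀ i, i ≤ ℓ → pairC ℓ i β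
      = -(if i = k then -1 else if i + i0 = k then (1:ℚ) else 0) := by
    intro i hi
    rw [hβ, pairC_comb, pairDelta ℓ i hℓ hi, pairXiM ℓ k i0 i hℓ hi h2 hik hk]
    ring
  have b1 : β.2 k * dC ℓ k = 2 * (m:ℚ) := by
    rw [hβ, coef_sub, xiM_zero ℓ k i0 k (Or.inl le_rfl), delta_val]
    unfold dC
    split_ifs <;> first | ring1 | (exfalso; omega)
  have b2 : β.2 (k - i0) * dC ℓ (k - i0) = 2 * (m:ℚ) - (i0:ℚ) := by
    rw [hβ, coef_sub, delta_val]
    unfold dC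
    by_cases hcase : i0 < k
    · rw [xiM_const ℓ k i0 (k - i0) (by omega) (by omega) hk (by omega)]
      split_ifs <;> first | ring1 | (exfalso; omega)
    · rw [(by omega : k - i0 = 0), xiM_nought ℓ k i0 (by omega) hk]
      split_ifs <;> first | ring1 | (exfalso; omega)
  have hform : formC ℓ β β = (i0:ℚ) := by
    rw [formC_self ℓ β hβ1]
    have key : ∀ i ∈ Finset.range (ℓ+1), β.2 i * dC ℓ i * pairC ℓ i β
        = (if i = k then β.2 i * dC ℓ i else if i = k - i0 then -(β.2 i * dC ℓ i) else 0) := by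
      intro i hi
      rw [hpair i (by simp at hi; omega)]
      have heq : (i + i0 = k) = (i = k - i0) := by simp; omega
      simp only [heq]
      split_ifs <;> first | ring1 | (exfalso; omega)
    rw [Finset.sum_congr rfl key,
      sum_two (ℓ+1) k (k - i0) (by omega) (by omega) (by omega)]
    rw [b1]
    have : -(β.2 (k - i0) * dC ℓ (k - i0)) = -(2 * (m:ℚ) - (i0:ℚ)) := by rw [b2]
    rw [this]
    ring
  have hlam : formC ℓ (Lam k) β = 2 * (m:ℚ) := by
    rw [formC_Lam ℓ k hk β hβ1, mul_comm, b1]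
  rw [defC, hlam, hform]

lemma def0 (ℓ k m : ℕ) (hℓ : 2 ≤ ℓ) (hk : k ≤ ℓ) (ξ : Wt)
    (hx1 : ∀ x, ξ.1 x = 0) (hx2 : ∀ x, ξ.2 x = 0) :
    defC ℓ k (m • deltaC ℓ - ξ) = 2 * (m:ℚ) := by
  set β := m • deltaC ℓ - ξ with hβ
  have hβ1 : ∀ x, β.1 x = 0 := by
    intro x
    rw [hβ, coef1_sub, hx1]
    show (m:ℚ) * (0:ℕ→ℚ) x - 0 = 0
    simp
  have hpx : ∀ i, pairC ℓ i ξ = 0 := by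
    intro i
    rw [pairC, hx1, zero_add]
    exact Finset.sum_eq_zero (fun j _ => by rw [hx2]; ring)
  have hpair : ∀ i, i ≤ ℓ → pairC ℓ i β = 0 := by
    intro i hi
    rw [hβ, pairC_comb, pairDelta ℓ i hℓ hi, hpx]
    ring
  have hform : formC ℓ β β = 0 := by
    rw [formC_self ℓ β hβ1]
    exact Finset.sum_eq_zero (fun i hi => by
      rw [hpair i (by simp at hi; omega)]; ring)
  have b1 : β.2 k * dC ℓ k = 2 * (m:ℚ) := by
    rw [hβ, coef_sub, hx2, delta_val]
    unfold dC
    split_ifs <;> first | ring1 | (exfalso; omega)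
  have hlam : formC ℓ (Lam k) β = 2 * (m:ℚ) := by
    rw [formC_Lam ℓ k hk β hβ1, mul_comm, b1]
  rw [defC, hlam, hform]
  ring

end Def

section Coef

lemma coefP (ℓ k i0 m j : ℕ) (hℓ : 2 ≤ ℓ) (hk : k ≤ ℓ) (hev : Even i0)
    (hm : i0 ≤ 2*m) (hki : k + i0 ≤ ℓ) :
    ∃ c : ℕ, (m • deltaC ℓ - xiP ℓ k i0).2 j = c := by
  obtain ⟨r, hr⟩ := hev
  rw [coef_sub, delta_val]
  by_cases h1 : ℓ < j
  · refine ⟨0, ?_⟩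
    rw [xiP_zero ℓ k i0 j (Or.inr h1), if_neg (by omega), if_neg (by omega)]
    norm_num
  by_cases h2 : j ≤ k
  · rw [xiP_zero ℓ k i0 j (Or.inl h2)]
    by_cases h3 : j = 0 ∨ j = ℓ
    · exact ⟨m, by rw [if_pos h3]; push_cast; ring⟩
    · exact ⟨2*m, by rw [if_neg h3, if_pos (by omega)]; push_cast; ring⟩
  by_cases h4 : j = ℓ
  · refine ⟨m - r, ?_⟩
    rw [h4, xiP_ell ℓ k i0 (by omega), if_pos (Or.inr rfl),
      Nat.cast_sub (by omega : r ≤ m)]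
    have h5 : (i0:ℚ) = (r:ℚ) + (r:ℚ) := by exact_mod_cast hr
    rw [h5]
    ring
  · refine ⟨2*m - min (j-k) i0, ?_⟩
    have hx : (xiP ℓ k i0).2 j = ((min (j-k) i0 : ℕ) : ℚ) := by
      show (if j ≤ k ∨ ℓ < j then (0:ℚ) else if j = ℓ then _ else _) = _
      rw [if_neg (by omega), if_neg h4, Nat.cast_min, Nat.cast_sub (by omega : k ≤ j)]
    rw [hx, if_neg (by omega), if_pos (by omega),
      Nat.cast_sub (by omega : min (j-k) i0 ≤ 2*m)]
    push_cast
    ring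

lemma coefM (ℓ k i0 m j : ℕ) (hℓ : 2 ≤ ℓ) (hk : k ≤ ℓ) (hev : Even i0)
    (hm : i0 ≤ 2*m) (hik : i0 ≤ k) :
    ∃ c : ℕ, (m • deltaC ℓ - xiM ℓ k i0).2 j = c := by
  obtain ⟨r, hr⟩ := hev
  rw [coef_sub, delta_val]
  by_cases h1 : ℓ < j
  · refine ⟨0, ?_⟩
    rw [xiM_zero ℓ k i0 j (Or.inr h1), if_neg (by omega), if_neg (by omega)]
    norm_num
  by_cases h2 : k ≤ j
  · rw [xiM_zero ℓ k i0 j (Or.inl h2)]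
    by_cases h3 : j = 0 ∨ j = ℓ
    · exact ⟨m, by rw [if_pos h3]; push_cast; ring⟩
    · exact ⟨2*m, by rw [if_neg h3, if_pos (by omega)]; push_cast; ring⟩
  by_cases h4 : j = 0
  · refine ⟨m - r, ?_⟩
    subst h4
    rw [xiM_nought ℓ k i0 (by omega) hk, if_pos (Or.inl rfl),
      Nat.cast_sub (by omega : r ≤ m)]
    have h5 : (i0:ℚ) = (r:ℚ) + (r:ℚ) := by exact_mod_cast hr
    rw [h5]
    ring
  · refine ⟨2*m - min (k-j) i0, ?_⟩
    have hx : (xiM ℓ k i0).2 j = ((min (k-j) i0 : ℕ) : ℚ) := by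
      show (if k ≤ j ∨ ℓ < j then (0:ℚ) else if j = 0 then _ else _) = _
      rw [if_neg (by omega), if_neg h4, Nat.cast_min, Nat.cast_sub (by omega : j ≤ k)]
    rw [hx, if_neg (by omega), if_pos (by omega),
      Nat.cast_sub (by omega : min (k-j) i0 ≤ 2*m)]
    push_cast
    ring

end Coef


/-- mδ − ξ_k^{(±i)} lies in the positive cone Q⁺ and
def_{Λ_k}(mδ − ξ_k^{(±i)}) = 2m − i/2 ≥ i/2 ≥ 0. -/
theorem stmt18 (ℓ k i m : ℕ) (hℓ : 2 ≤ ℓ) (hk : k ≤ ℓ) (hev : Even i)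
    (hm : i ≤ 2 * m) :
    (k + i ≤ ℓ →
      (m • deltaC ℓ - xiP ℓ k i).1 = 0 ∧
      (∀ j, ∃ c : ℕ, (m • deltaC ℓ - xiP ℓ k i).2 j = c) ∧
      defC ℓ k (m • deltaC ℓ - xiP ℓ k i) = 2 * (m : ℚ) - (i : ℚ) / 2 ∧
      (i : ℚ) / 2 ≤ 2 * (m : ℚ) - (i : ℚ) / 2 ∧ (0 : ℚ) ≤ (i : ℚ) / 2) ∧
    (i ≤ k →
      (m • deltaC ℓ - xiM ℓ k i).1 = 0 ∧
      (∀ j, ∃ c : ℕ, (m • deltaC ℓ - xiM ℓ k i).2 j = c) ∧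
      defC ℓ k (m • deltaC ℓ - xiM ℓ k i) = 2 * (m : ℚ) - (i : ℚ) / 2 ∧
      (i : ℚ) / 2 ≤ 2 * (m : ℚ) - (i : ℚ) / 2 ∧ (0 : ℚ) ≤ (i : ℚ) / 2) := by
  have hineq : (i : ℚ) / 2 ≤ 2 * (m : ℚ) - (i : ℚ) / 2 := by
    have : (i:ℚ) ≤ 2 * (m:ℚ) := by exact_mod_cast hm
    linarith
  have hpos : (0 : ℚ) ≤ (i : ℚ) / 2 := by positivity
  constructor
  · intro hki
    refine ⟨?_, fun j => coefP ℓ k i m j hℓ hk hev hm hki, ?_, hineq, hpos⟩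
    · funext x
      rw [coef1_sub]
      show (m:ℚ) * (0:ℕ→ℚ) x - (0:ℕ→ℚ) x = (0:ℕ→ℚ) x
      simp
    · rcases eq_or_ne i 0 with h0 | h0
      · subst h0
        rw [def0 ℓ k m hℓ hk (xiP ℓ k 0) (fun x => rfl) (xiP_all_zero ℓ k)]
        norm_num
      · have h2 : 2 ≤ i := by
          obtain ⟨r, hr⟩ := hev
          omega
        exact defP ℓ k i m hℓ hk h2 hki
  · intro hik
    refine ⟨?_, fun j => coefM ℓ k i m j hℓ hk hev hm hik, ?_, hineq, hpos⟩
    · funext x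
      rw [coef1_sub]
      show (m:ℚ) * (0:ℕ→ℚ) x - (0:ℕ→ℚ) x = (0:ℕ→ℚ) x
      simp
    · rcases eq_or_ne i 0 with h0 | h0
      · subst h0
        rw [def0 ℓ k m hℓ hk (xiM ℓ k 0) (fun x => rfl) (fun x => xiM_all_zero ℓ k x hk)]
        norm_num
      · have h2 : 2 ≤ i := by
          obtain ⟨r, hr⟩ := hev
          omega
        exact defM ℓ k i m hℓ hk h2 hik
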